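/- arXiv:1602.06256 — 6 statements merged into one kernel-verified Lean document; each statement's English description precedes it below -/
import Mathlib

section
/- Suppose f: (0,∞) → (0,∞) is continuous, x ↦ f(x)/x is bounded on [1,∞), and there exist ε ∈ (0,1) and a decreasing function φ: (0,∞) → (0,∞) such that f(x)/(x^{1-ε} φ(x)) → 1 as x → ∞. Then with F(x) = ∫₁ˣ du/f(u), one has limsup_{x→∞} f(x) F(x)/x < ∞. -/
/-!
For `u` beyond some `x₁`, `½ u ^ (1 - ε) φ u ≤ f u ≤ 2 u ^ (1 - ε) φ u`. Split
`F x = F x₁ + ∫_{x₁}^x du / f u`; the first part contributes `(f x / x) F x₁ ≤ K |F x₁|`. On `[x₁, x]`,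
monotonicity of `φ` gives `f u ≥ ½ φ x u ^ (1 - ε)`, so the integral is at most `2 x ^ ε / (ε φ x)`;
multiplied by `f x ≤ 2 φ x x ^ (1 - ε)`, the factors `φ x` cancel and leave `4 x / ε`.
-/

open Filter Real Set

theorem Filter.Tendsto.eventually_mul_le_and_le_mul_of_div {α : Type*} {l : Filter α}
    {f g : α → ℝ} {c C : ℝ} (h : Tendsto (fun x => f x / g x) l (nhds 1)) (hc : c < 1) (hC : 1 < C)
    (hg : ∀ᶠ x in l, 0 < g x) : ∀ᶠ x in l, c * g x ≤ f x ∧ f x ≤ C * g x := by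
  filter_upwards [hg, h.eventually (eventually_ge_nhds hc), h.eventually (eventually_le_nhds hC)]
    with x hgx hlo hhi
  exact ⟨(le_div_iff₀ hgx).1 hlo, (div_le_iff₀ hgx).1 hhi⟩

theorem intervalIntegral.integral_one_div_le_of_mul_rpow_le {f : ℝ → ℝ} {a x ε m : ℝ}
    (ha : 0 < a) (hax : a ≤ x) (hε : 0 < ε) (hm : 0 < m)
    (hlow : ∀ u ∈ Icc a x, m * u ^ (1 - ε) ≤ f u) :
    ∫ u in a..x, 1 / f u ≤ x ^ ε / (m * ε) := by
  have hx : 0 < x := ha.trans_le hax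
  have hbound : 0 ≤ x ^ ε / (m * ε) := by positivity
  by_cases hint : IntervalIntegrable (fun u => 1 / f u) MeasureTheory.volume a x
  swap
  · rwa [intervalIntegral.integral_undef hint]
  have hpow_int : IntervalIntegrable (fun u => m⁻¹ * u ^ (ε - 1)) MeasureTheory.volume a x :=
    (intervalIntegral.intervalIntegrable_rpow' (by linarith)).const_mul _
  have hpt : ∀ u ∈ Icc a x, 1 / f u ≤ m⁻¹ * u ^ (ε - 1) := by
    intro u hu
    have hu : 0 < u := ha.trans_le hu.1
    have hmu : 0 < m * u ^ (1 - ε) := by positivity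
    calc 1 / f u ≤ 1 / (m * u ^ (1 - ε)) := one_div_le_one_div_of_le hmu (hlow u ‹_›)
      _ = m⁻¹ * u ^ (ε - 1) := by
        rw [show ε - 1 = -(1 - ε) by ring, rpow_neg hu.le]
        field_simp
  calc ∫ u in a..x, 1 / f u ≤ ∫ u in a..x, m⁻¹ * u ^ (ε - 1) :=
        intervalIntegral.integral_mono_on hax hint hpow_int hpt
    _ = m⁻¹ * ((x ^ ε - a ^ ε) / ε) := by
        rw [intervalIntegral.integral_const_mul, integral_rpow (Or.inl (by linarith)),
          sub_add_cancel]
    _ ≤ x ^ ε / (m * ε) := by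
        have : 0 ≤ a ^ ε / (m * ε) := by positivity
        rw [show m⁻¹ * ((x ^ ε - a ^ ε) / ε) = x ^ ε / (m * ε) - a ^ ε / (m * ε) by field_simp]
        linarith

theorem mul_integral_one_div_div_le_of_asymptotics {f φ : ℝ → ℝ} {a x ε c C : ℝ}
    (ha : 0 < a) (hax : a ≤ x) (hε : 0 < ε) (hc : 0 < c) (hφx : 0 < φ x)
    (hφ : ∀ u ∈ Icc a x, φ x ≤ φ u) (hlow : ∀ u ∈ Icc a x, c * (u ^ (1 - ε) * φ u) ≤ f u)
    (hup : f x ≤ C * (x ^ (1 - ε) * φ x)) :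
    f x * (∫ u in a..x, 1 / f u) / x ≤ C / (c * ε) := by
  have hx : 0 < x := ha.trans_le hax
  have hlow' : ∀ u ∈ Icc a x, c * φ x * u ^ (1 - ε) ≤ f u := fun u hu => by
    have hu : 0 < u := ha.trans_le hu.1
    calc c * φ x * u ^ (1 - ε) = c * (u ^ (1 - ε) * φ x) := by ring
      _ ≤ c * (u ^ (1 - ε) * φ u) := by gcongr; exact hφ u ‹_›
      _ ≤ f u := hlow u ‹_›
  have hf_pos : ∀ u ∈ Icc a x, 0 < f u := fun u hu =>
    lt_of_lt_of_le (by have := ha.trans_le hu.1; positivity) (hlow' u hu)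
  have hint_nonneg : 0 ≤ ∫ u in a..x, 1 / f u :=
    intervalIntegral.integral_nonneg hax fun u hu => (one_div_pos.2 (hf_pos u hu)).le
  rw [div_le_iff₀ hx]
  calc f x * ∫ u in a..x, 1 / f u ≤ C * (x ^ (1 - ε) * φ x) * (x ^ ε / (c * φ x * ε)) :=
        mul_le_mul hup
          (intervalIntegral.integral_one_div_le_of_mul_rpow_le ha hax hε (by positivity) hlow')
          hint_nonneg ((hf_pos x ⟨hax, le_rfl⟩).le.trans hup)
    _ = C / (c * ε) * (x ^ (1 - ε) * x ^ ε) := by field_simp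
    _ = C / (c * ε) * x := by rw [← rpow_add hx, sub_add_cancel, rpow_one]

theorem stmt_5 (f φ : ℝ → ℝ) (ε : ℝ)
    (hf_cont : ContinuousOn f (Set.Ioi 0))
    (hf_pos : ∀ x ∈ Set.Ioi (0:ℝ), 0 < f x)
    (hbdd : ∃ K : ℝ, ∀ x ∈ Set.Ici (1:ℝ), f x / x ≤ K)
    (hε : ε ∈ Set.Ioo (0:ℝ) 1)
    (hφ_pos : ∀ x ∈ Set.Ioi (0:ℝ), 0 < φ x)
    (hφ_dec : ∀ x y : ℝ, 0 < x → x ≤ y → φ y ≤ φ x)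
    (hasym : Tendsto (fun x => f x / (x ^ (1 - ε) * φ x)) atTop (nhds 1))
    (F : ℝ → ℝ) (hF : ∀ x > (0:ℝ), F x = ∫ u in (1:ℝ)..x, 1 / f u) :
    Filter.IsBoundedUnder (· ≤ ·) atTop (fun x => f x * F x / x) := by
  obtain ⟨K, hK⟩ := hbdd
  have hint : ∀ a b : ℝ, 0 < a → 0 < b →
      IntervalIntegrable (fun u => 1 / f u) MeasureTheory.volume a b := fun a b ha hb =>
    ((continuousOn_const.div hf_cont fun u hu => (hf_pos u hu).ne').mono
      (ordConnected_Ioi.uIcc_subset ha hb)).intervalIntegrable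
  have hden : ∀ᶠ x in atTop, 0 < x ^ (1 - ε) * φ x := by
    filter_upwards [eventually_gt_atTop 0] with x hx
    exact mul_pos (rpow_pos_of_pos hx _) (hφ_pos x hx)
  obtain ⟨x₁, hx₁⟩ := eventually_atTop.1 <| (eventually_ge_atTop 1).and <|
    hasym.eventually_mul_le_and_le_mul_of_div (by norm_num : (1 / 2 : ℝ) < 1) one_lt_two hden
  have hx₁0 : 0 < x₁ := one_pos.trans_le (hx₁ x₁ le_rfl).1
  refine ⟨K * |F x₁| + 2 / (1 / 2 * ε), eventually_map.2 ?_⟩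
  filter_upwards [eventually_ge_atTop x₁] with x hx
  obtain ⟨hx1, -, hfx⟩ := hx₁ x hx
  have hx0 : 0 < x := one_pos.trans_le hx1
  have hsplit : F x = F x₁ + ∫ u in x₁..x, 1 / f u := by
    rw [hF x hx0, hF x₁ hx₁0,
      intervalIntegral.integral_add_adjacent_intervals (hint 1 x₁ one_pos hx₁0) (hint x₁ x hx₁0 hx0)]
  have hfirst : f x / x * F x₁ ≤ K * |F x₁| :=
    (mul_le_mul_of_nonneg_left (le_abs_self _) (div_pos (hf_pos x hx0) hx0).le).trans
      (mul_le_mul_of_nonneg_right (hK x hx1) (abs_nonneg _))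
  have hsecond := mul_integral_one_div_div_le_of_asymptotics hx₁0 hx hε.1 one_half_pos
    (hφ_pos x hx0) (fun u hu => hφ_dec u x (hx₁0.trans_le hu.1) hu.2)
    (fun u hu => (hx₁ u hu.1).2.1) hfx
  calc f x * F x / x = f x / x * F x₁ + f x * (∫ u in x₁..x, 1 / f u) / x := by
        rw [hsplit]; ring
    _ ≤ K * |F x₁| + 2 / (1 / 2 * ε) := add_le_add hfirst hsecond
end

section
/- Let φ ∈ C¹(ℝ⁺;ℝ⁺) be strictly decreasing and positive, and define Φ(x) = ∫₁ˣ du/φ(u) for x ≥ 1. Then for each A ∈ ℝ and B ∈ (0,∞), Φ⁻¹(A + Bt)/Φ⁻¹(Bt) → 1 as t → ∞. -/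
open Filter Real Set

theorem stmt_7 (φ φ' Φ Φinv : ℝ → ℝ)
    (hφ_deriv : ∀ x ∈ Set.Ici (0:ℝ), HasDerivAt φ (φ' x) x)
    (hφ'_cont : ContinuousOn φ' (Set.Ici 0))
    (hφ_pos : ∀ x ∈ Set.Ici (0:ℝ), 0 < φ x)
    (hφ_sdec : ∀ x y : ℝ, 0 ≤ x → x < y → φ y < φ x)
    (hΦ : ∀ x ≥ (1:ℝ), Φ x = ∫ u in (1:ℝ)..x, 1 / φ u)
    (hΦinv_right : ∀ t ≥ (0:ℝ), Φ (Φinv t) = t)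
    (hΦinv_ge : ∀ t ≥ (0:ℝ), 1 ≤ Φinv t)
    (hΦinv_left : ∀ x ≥ (1:ℝ), Φinv (Φ x) = x) :
    ∀ (A : ℝ) (B : ℝ), 0 < B →
      Tendsto (fun t => Φinv (A + B * t) / Φinv (B * t)) atTop (nhds 1) := by
  intro A B hB
  have hφ_cont : ContinuousOn φ (Set.Ici 0) := fun x hx =>
    (hφ_deriv x hx).continuousAt.continuousWithinAt
  have hinv_cont : ContinuousOn (fun u => 1 / φ u) (Set.Ici 0) :=
    continuousOn_const.div hφ_cont (fun x hx => (hφ_pos x hx).ne')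
  have hint : ∀ a b : ℝ, 0 ≤ a → 0 ≤ b →
      IntervalIntegrable (fun u => 1 / φ u) MeasureTheory.volume a b := by
    intro a b ha hb
    apply (hinv_cont.mono ?_).intervalIntegrable
    intro x hx
    exact le_trans (le_min ha hb) hx.1
  have hφ1pos : 0 < φ 1 := hφ_pos 1 (by norm_num)
  -- difference formula for Φ
  have hdiff : ∀ a b : ℝ, 1 ≤ a → 1 ≤ b → Φ b - Φ a = ∫ u in a..b, 1 / φ u := by
    intro a b ha hb
    have h := intervalIntegral.integral_add_adjacent_intervals
      (hint 1 a (by norm_num) (by linarith)) (hint a b (by linarith) (by linarith))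
    rw [hΦ a ha, hΦ b hb]
    linarith
  -- monotonicity of Φ on [1, ∞)
  have hΦmono : ∀ a b : ℝ, 1 ≤ a → a ≤ b → Φ a ≤ Φ b := by
    intro a b ha hab
    have h0 : (0:ℝ) ≤ ∫ u in a..b, 1 / φ u := by
      apply intervalIntegral.integral_nonneg hab
      intro u hu
      have hu0 : (0:ℝ) ≤ u := le_trans (by linarith) hu.1
      exact le_of_lt (one_div_pos.mpr (hφ_pos u hu0))
    have := hdiff a b ha (le_trans ha hab)
    linarith
  -- φ u ≤ φ 1 for u ≥ 1
  have hφle : ∀ u : ℝ, 1 ≤ u → φ u ≤ φ 1 := by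
    intro u hu
    rcases eq_or_lt_of_le hu with h | h
    · rw [← h]
    · exact le_of_lt (hφ_sdec 1 u (by norm_num) h)
  -- key lemma: increments of Φinv are controlled
  have key : ∀ s u : ℝ, 0 ≤ s → s ≤ u →
      Φinv s ≤ Φinv u ∧ Φinv u - Φinv s ≤ (u - s) * φ 1 := by
    intro s u hs hsu
    have hu : 0 ≤ u := hs.trans hsu
    have ha := hΦinv_ge s hs
    have hb := hΦinv_ge u hu
    have hmono : Φinv s ≤ Φinv u := by
      by_contra h
      push_neg at h
      have h2 := hΦmono (Φinv u) (Φinv s) hb h.le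
      rw [hΦinv_right u hu, hΦinv_right s hs] at h2
      have h3 : u = s := le_antisymm h2 hsu
      exact h.ne (by rw [h3])
    refine ⟨hmono, ?_⟩
    -- lower bound the integral
    have hlow : (Φinv u - Φinv s) * (1 / φ 1) ≤ ∫ x in Φinv s..Φinv u, 1 / φ x := by
      have hc : (∫ _ in Φinv s..Φinv u, (1 / φ 1 : ℝ)) = (Φinv u - Φinv s) * (1 / φ 1) := by
        rw [intervalIntegral.integral_const, smul_eq_mul]
      rw [← hc]
      apply intervalIntegral.integral_mono_on hmono
        (intervalIntegrable_const) (hint _ _ (by linarith) (by linarith))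
      intro x hx
      have hx1 : 1 ≤ x := le_trans ha hx.1
      exact one_div_le_one_div_of_le (hφ_pos x (Set.mem_Ici.mpr (by linarith))) (hφle x hx1)
    have heq : u - s = ∫ x in Φinv s..Φinv u, 1 / φ x := by
      rw [← hdiff _ _ ha hb, hΦinv_right u hu, hΦinv_right s hs]
    rw [← heq] at hlow
    rw [mul_one_div, div_le_iff₀ hφ1pos] at hlow
    exact hlow
  -- Φinv tends to infinity
  have hΦinv_top : Tendsto Φinv atTop atTop := by
    rw [tendsto_atTop]
    intro M
    set M' := max M 1 with hM'
    have hM'1 : (1:ℝ) ≤ M' := le_max_right _ _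
    filter_upwards [eventually_ge_atTop (max 0 (Φ M' + 1))] with t ht
    have ht0 : 0 ≤ t := le_trans (le_max_left _ _) ht
    have htM : Φ M' < t := by
      have := le_trans (le_max_right _ _) ht
      linarith
    by_contra h
    push_neg at h
    have h1 : Φinv t ≤ M' := le_trans h.le (le_max_left _ _)
    have h2 := hΦmono (Φinv t) M' (hΦinv_ge t ht0) h1
    rw [hΦinv_right t ht0] at h2
    linarith
  have hBt : Tendsto (fun t : ℝ => B * t) atTop atTop :=
    Tendsto.const_mul_atTop hB tendsto_id
  have hden : Tendsto (fun t => Φinv (B * t)) atTop atTop := hΦinv_top.comp hBt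
  -- bounded numerator difference
  have hnum : ∀ᶠ t in atTop, |Φinv (A + B * t) - Φinv (B * t)| ≤ |A| * φ 1 := by
    filter_upwards [hBt.eventually_ge_atTop (max 0 (-A))] with t ht
    have h1 : 0 ≤ B * t := le_trans (le_max_left _ _) ht
    have h2 : 0 ≤ A + B * t := by
      have := le_trans (le_max_right _ _) ht; linarith
    rcases le_or_gt 0 A with hA | hA
    · obtain ⟨hm, hbd⟩ := key (B * t) (A + B * t) h1 (by linarith)
      rw [abs_of_nonneg (by linarith), abs_of_nonneg hA]
      nlinarith
    · obtain ⟨hm, hbd⟩ := key (A + B * t) (B * t) h2 (by linarith)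
      rw [abs_of_nonpos (by linarith), abs_of_neg hA]
      nlinarith
  -- conclude
  have hzero : Tendsto (fun t => Φinv (A + B * t) / Φinv (B * t) - 1) atTop (nhds 0) := by
    apply squeeze_zero_norm' (a := fun t => (|A| * φ 1) / Φinv (B * t))
    · filter_upwards [hnum, hBt.eventually_ge_atTop 0] with t h1 h2
      have hge : (1:ℝ) ≤ Φinv (B * t) := hΦinv_ge _ h2
      have hne : Φinv (B * t) ≠ 0 := by linarith
      have : Φinv (A + B * t) / Φinv (B * t) - 1
          = (Φinv (A + B * t) - Φinv (B * t)) / Φinv (B * t) := by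
        field_simp
      rw [this, Real.norm_eq_abs, abs_div, abs_of_pos (by linarith : (0:ℝ) < Φinv (B * t))]
      gcongr
    · exact Tendsto.div_atTop tendsto_const_nhds hden
  have := hzero.add (tendsto_const_nhds (x := (1:ℝ)) (f := atTop))
  simpa using this
end

section
/- Let φ ∈ C¹(ℝ⁺;ℝ⁺) be strictly decreasing and positive, and define Φ(x) = ∫₁ˣ du/φ(u). Then for all ε ∈ (0,1) and all t ≥ 0, Φ⁻¹((1+ε)t)/Φ⁻¹(t) < 1/(1−ε). -/
open Filter Real Set

theorem stmt_8 (φ φ' Φ Φinv : ℝ → ℝ)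
    (hφ_deriv : ∀ x ∈ Set.Ici (0:ℝ), HasDerivAt φ (φ' x) x)
    (hφ'_cont : ContinuousOn φ' (Set.Ici 0))
    (hφ_pos : ∀ x ∈ Set.Ici (0:ℝ), 0 < φ x)
    (hφ_sdec : ∀ x y : ℝ, 0 ≤ x → x < y → φ y < φ x)
    (hΦ : ∀ x ≥ (1:ℝ), Φ x = ∫ u in (1:ℝ)..x, 1 / φ u)
    (hΦinv_right : ∀ t ≥ (0:ℝ), Φ (Φinv t) = t)
    (hΦinv_ge : ∀ t ≥ (0:ℝ), 1 ≤ Φinv t)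
    (hΦinv_left : ∀ x ≥ (1:ℝ), Φinv (Φ x) = x) :
    ∀ ε ∈ Set.Ioo (0:ℝ) 1, ∀ t ≥ (0:ℝ),
      Φinv ((1 + ε) * t) / Φinv t < 1 / (1 - ε) := by
  intro ε hε t ht
  obtain ⟨hε0, hε1⟩ := hε
  set a := Φinv t with ha
  set b := Φinv ((1 + ε) * t) with hb
  have ht' : 0 ≤ (1 + ε) * t := by nlinarith
  have ha1 : 1 ≤ a := hΦinv_ge t ht
  have hb1 : 1 ≤ b := hΦinv_ge _ ht'
  have ha0 : 0 < a := by linarith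
  have hΦa : Φ a = t := hΦinv_right t ht
  have hΦb : Φ b = (1 + ε) * t := hΦinv_right _ ht'
  have hφa_pos : 0 < φ a := hφ_pos a (by simp only [Set.mem_Ici]; linarith)
  have hcancel : (1 / φ a) * φ a = 1 := one_div_mul_cancel hφa_pos.ne'
  have hφcont : ContinuousOn φ (Set.Ici 0) := fun x hx =>
    (hφ_deriv x hx).continuousAt.continuousWithinAt
  have hinv_cont : ContinuousOn (fun u => 1 / φ u) (Set.Ici 0) :=
    continuousOn_const.div hφcont (fun x hx => (hφ_pos x hx).ne')
  have hint : ∀ x y : ℝ, 1 ≤ x → x ≤ y →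
      IntervalIntegrable (fun u => 1 / φ u) MeasureTheory.volume x y := by
    intro x y hx hxy
    apply (hinv_cont.mono ?_).intervalIntegrable
    rw [Set.uIcc_of_le hxy]
    intro u hu
    exact le_trans (by linarith) hu.1
  -- 1/φ is increasing
  have hmono : ∀ x y : ℝ, 1 ≤ x → x ≤ y → 1 / φ x ≤ 1 / φ y := by
    intro x y hx hxy
    rcases eq_or_lt_of_le hxy with h | h
    · rw [h]
    · have hlt := hφ_sdec x y (by linarith) h
      have hφy : 0 < φ y := hφ_pos y (by simp only [Set.mem_Ici]; linarith)
      exact one_div_le_one_div_of_le hφy hlt.le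
  -- (1): t ≤ (a - 1) * (1/φ a)
  have h1 : t * φ a ≤ a - 1 := by
    have hle : Φ a ≤ ∫ _ in (1:ℝ)..a, 1 / φ a := by
      rw [hΦ a ha1]
      apply intervalIntegral.integral_mono_on ha1 (hint 1 a le_rfl ha1)
        intervalIntegrable_const
      intro u hu
      exact hmono u a hu.1 hu.2
    rw [intervalIntegral.integral_const, smul_eq_mul, hΦa] at hle
    nlinarith [mul_le_mul_of_nonneg_right hle hφa_pos.le]
  rw [div_lt_div_iff₀ ha0 (by linarith : (0:ℝ) < 1 - ε)]
  by_cases hba : b ≤ a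
  · nlinarith
  push_neg at hba
  -- (2): (b - a) * (1/φ a) ≤ ε * t
  have hsplit : Φ b - Φ a = ∫ u in a..b, 1 / φ u := by
    rw [hΦ a ha1, hΦ b hb1,
      ← intervalIntegral.integral_add_adjacent_intervals (hint 1 a le_rfl ha1)
        (hint a b ha1 hba.le)]
    ring
  have h2 : b - a ≤ ε * t * φ a := by
    have hle : (∫ _ in a..b, 1 / φ a) ≤ Φ b - Φ a := by
      rw [hsplit]
      apply intervalIntegral.integral_mono_on hba.le intervalIntegrable_const
        (hint a b ha1 hba.le)
      intro u hu
      exact hmono a u ha1 hu.1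
    rw [intervalIntegral.integral_const, smul_eq_mul, hΦa, hΦb] at hle
    have h3 : (b - a) * (1 / φ a) ≤ ε * t := by linarith
    nlinarith [mul_le_mul_of_nonneg_right h3 hφa_pos.le]
  nlinarith [mul_pos hε0 (by linarith : (0:ℝ) < 1 - ε)]
end

section
/- Suppose f: ℝ⁺ → (0,∞) is continuous and asymptotic to a C¹ strictly decreasing function φ: ℝ⁺ → (0,∞) (i.e., f(x)/φ(x) → 1 as x → ∞). Let F(x) = ∫₁ˣ du/f(u) and Φ(x) = ∫₁ˣ du/φ(u). Then F⁻¹(t)/Φ⁻¹(t) → 1 as t → ∞. -/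
open Filter Real Set

theorem stmt_9 (f φ φ' F Φ Finv Φinv : ℝ → ℝ)
    (hf_cont : ContinuousOn f (Set.Ici 0))
    (hf_pos : ∀ x ∈ Set.Ici (0:ℝ), 0 < f x)
    (hφ_deriv : ∀ x ∈ Set.Ici (0:ℝ), HasDerivAt φ (φ' x) x)
    (hφ'_cont : ContinuousOn φ' (Set.Ici 0))
    (hφ_pos : ∀ x ∈ Set.Ici (0:ℝ), 0 < φ x)
    (hφ_sdec : ∀ x y : ℝ, 0 ≤ x → x < y → φ y < φ x)
    (hasym : Tendsto (fun x => f x / φ x) atTop (nhds 1))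
    (hF : ∀ x ≥ (1:ℝ), F x = ∫ u in (1:ℝ)..x, 1 / f u)
    (hΦ : ∀ x ≥ (1:ℝ), Φ x = ∫ u in (1:ℝ)..x, 1 / φ u)
    (hFinv_right : ∀ t ≥ (0:ℝ), F (Finv t) = t)
    (hFinv_ge : ∀ t ≥ (0:ℝ), 1 ≤ Finv t)
    (hFinv_left : ∀ x ≥ (1:ℝ), Finv (F x) = x)
    (hΦinv_right : ∀ t ≥ (0:ℝ), Φ (Φinv t) = t)
    (hΦinv_ge : ∀ t ≥ (0:ℝ), 1 ≤ Φinv t)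
    (hΦinv_left : ∀ x ≥ (1:ℝ), Φinv (Φ x) = x) :
    Tendsto (fun t => Finv t / Φinv t) atTop (nhds 1) := by
  have hφ_cont : ContinuousOn φ (Set.Ici 0) := fun x hx =>
    (hφ_deriv x hx).continuousAt.continuousWithinAt
  have hφ_mono : ∀ x y : ℝ, 0 ≤ x → x ≤ y → φ y ≤ φ x := by
    intro x y hx hxy
    rcases eq_or_lt_of_le hxy with h | h
    · exact le_of_eq (by rw [h])
    · exact (hφ_sdec x y hx h).le
  have hsub : ∀ a b : ℝ, 1 ≤ a → 1 ≤ b → Set.uIcc a b ⊆ Set.Ici 0 := by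
    intro a b ha hb x hx
    exact le_trans (le_trans zero_le_one (le_min ha hb)) hx.1
  have hint : ∀ (g : ℝ → ℝ), ContinuousOn g (Set.Ici 0) → (∀ x ∈ Set.Ici (0:ℝ), 0 < g x) →
      ∀ a b : ℝ, 1 ≤ a → 1 ≤ b → IntervalIntegrable (fun u => 1 / g u) MeasureTheory.volume a b := by
    intro g hg hgpos a b ha hb
    apply ContinuousOn.intervalIntegrable
    apply ContinuousOn.div continuousOn_const (hg.mono (hsub a b ha hb))
    intro x hx
    exact (hgpos x (hsub a b ha hb hx)).ne'
  have hintf := hint f hf_cont hf_pos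
  have hintφ := hint φ hφ_cont hφ_pos
  have haddF : ∀ a b : ℝ, 1 ≤ a → a ≤ b → F b = F a + ∫ u in a..b, 1 / f u := by
    intro a b ha hab
    rw [hF a ha, hF b (le_trans ha hab),
      intervalIntegral.integral_add_adjacent_intervals (hintf 1 a le_rfl ha)
        (hintf a b ha (le_trans ha hab))]
  have haddΦ : ∀ a b : ℝ, 1 ≤ a → a ≤ b → Φ b = Φ a + ∫ u in a..b, 1 / φ u := by
    intro a b ha hab
    rw [hΦ a ha, hΦ b (le_trans ha hab),
      intervalIntegral.integral_add_adjacent_intervals (hintφ 1 a le_rfl ha)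
        (hintφ a b ha (le_trans ha hab))]
  have hsm : ∀ (g G : ℝ → ℝ), ContinuousOn g (Set.Ici 0) → (∀ x ∈ Set.Ici (0:ℝ), 0 < g x) →
      (∀ x ≥ (1:ℝ), G x = ∫ u in (1:ℝ)..x, 1 / g u) →
      ∀ a b : ℝ, 1 ≤ a → a < b → G a < G b := by
    intro g G hg hgpos hG a b ha hab
    have hb : 1 ≤ b := le_trans ha hab.le
    have hadd : G b = G a + ∫ u in a..b, 1 / g u := by
      rw [hG a ha, hG b hb,
        intervalIntegral.integral_add_adjacent_intervals (hint g hg hgpos 1 a le_rfl ha)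
          (hint g hg hgpos a b ha hb)]
    have hpos : 0 < ∫ u in a..b, 1 / g u := by
      apply intervalIntegral.intervalIntegral_pos_of_pos_on (hint g hg hgpos a b ha hb) ?_ hab
      intro x hx
      exact one_div_pos.mpr (hgpos x (le_trans (le_trans zero_le_one ha) hx.1.le))
    linarith [hadd, hpos]
  have hsmF := hsm f F hf_cont hf_pos hF
  have hsmΦ := hsm φ Φ hφ_cont hφ_pos hΦ
  have hF1 : F 1 = 0 := by rw [hF 1 le_rfl, intervalIntegral.integral_same]
  have hΦ1 : Φ 1 = 0 := by rw [hΦ 1 le_rfl, intervalIntegral.integral_same]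
  have hFnonneg : ∀ x, 1 ≤ x → 0 ≤ F x := by
    intro x hx
    rcases eq_or_lt_of_le hx with h | h
    · rw [← h, hF1]
    · linarith [hsmF 1 x le_rfl h, hF1]
  have hΦnonneg : ∀ x, 1 ≤ x → 0 ≤ Φ x := by
    intro x hx
    rcases eq_or_lt_of_le hx with h | h
    · rw [← h, hΦ1]
    · linarith [hsmΦ 1 x le_rfl h, hΦ1]
  have hΦinv_le : ∀ s x : ℝ, 0 ≤ s → 1 ≤ x → s ≤ Φ x → Φinv s ≤ x := by
    intro s x hs hx hsx
    by_contra h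
    push_neg at h
    have := hsmΦ x (Φinv s) hx h
    rw [hΦinv_right s hs] at this
    linarith
  have hΦinv_ge2 : ∀ s x : ℝ, 0 ≤ s → 1 ≤ x → Φ x ≤ s → x ≤ Φinv s := by
    intro s x hs hx hsx
    by_contra h
    push_neg at h
    have := hsmΦ (Φinv s) x (hΦinv_ge s hs) h
    rw [hΦinv_right s hs] at this
    linarith
  -- key doubling lemma: Φinv (c t) ≤ c Φinv t for c ≥ 1
  have hdbl : ∀ t c : ℝ, 0 ≤ t → 1 ≤ c → Φinv (c * t) ≤ c * Φinv t := by
    intro t c ht hc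
    set x := Φinv t with hxdef
    have hx1 : 1 ≤ x := hΦinv_ge t ht
    have hx0 : (0:ℝ) ≤ x := by linarith
    have hΦx : Φ x = t := hΦinv_right t ht
    have hcx : x ≤ c * x := le_mul_of_one_le_left hx0 hc
    have hcx1 : 1 ≤ c * x := le_trans hx1 hcx
    have hφxpos : 0 < φ x := hφ_pos x hx0
    have ht_le : t ≤ x * (1 / φ x) := by
      have h1 : Φ x ≤ ∫ _u in (1:ℝ)..x, 1 / φ x := by
        rw [hΦ x hx1]
        apply intervalIntegral.integral_mono_on hx1 (hintφ 1 x le_rfl hx1)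
          intervalIntegrable_const
        intro u hu
        exact one_div_le_one_div_of_le hφxpos (hφ_mono u x (by linarith [hu.1]) hu.2)
      rw [intervalIntegral.integral_const, smul_eq_mul] at h1
      have h2 : (x - 1) * (1 / φ x) ≤ x * (1 / φ x) :=
        mul_le_mul_of_nonneg_right (by linarith) (one_div_pos.mpr hφxpos).le
      linarith [hΦx, h1, h2]
    have hI : (c * x - x) * (1 / φ x) ≤ ∫ u in x..(c*x), 1 / φ u := by
      have h1 : (∫ _u in x..(c*x), (1 / φ x)) ≤ ∫ u in x..(c*x), 1 / φ u := by
        apply intervalIntegral.integral_mono_on hcx intervalIntegrable_const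
          (hintφ x (c*x) hx1 hcx1)
        intro u hu
        exact one_div_le_one_div_of_le (hφ_pos u (Set.mem_Ici.mpr (by linarith [hu.1]))) (hφ_mono x u hx0 hu.1)
      rw [intervalIntegral.integral_const, smul_eq_mul] at h1
      exact h1
    have hΦcx : c * t ≤ Φ (c * x) := by
      have hadd : Φ (c*x) = Φ x + ∫ u in x..(c*x), 1 / φ u := haddΦ x (c*x) hx1 hcx
      have h3 : (c - 1) * t ≤ (c * x - x) * (1 / φ x) := by
        have h4 := mul_le_mul_of_nonneg_left ht_le (by linarith : (0:ℝ) ≤ c - 1)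
        nlinarith [h4]
      rw [hadd, hΦx]
      linarith [hI, h3]
    exact hΦinv_le (c*t) (c*x) (mul_nonneg (by linarith) ht) hcx1 hΦcx
  -- main argument
  rw [Metric.tendsto_nhds]
  intro ε hε
  set η := min (ε/3) (1/4) with hηdef
  have hη0 : 0 < η := lt_min (by linarith) (by norm_num)
  have hη4 : η ≤ 1/4 := min_le_right _ _
  have hηε : 2*η < ε := by
    have h : η ≤ ε/3 := min_le_left _ _
    linarith
  have hev : ∀ᶠ x in atTop, |f x / φ x - 1| < η := by
    have h := Metric.tendsto_nhds.mp hasym η hη0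
    simpa [Real.dist_eq] using h
  obtain ⟨x₀', hx₀'⟩ := eventually_atTop.mp hev
  set x₀ := max x₀' 1 with hx₀def
  have hx₀1 : 1 ≤ x₀ := le_max_right _ _
  have hbound : ∀ x, x₀ ≤ x → (1-η) * φ x ≤ f x ∧ f x ≤ (1+η) * φ x := by
    intro x hx
    have hx1 : 1 ≤ x := le_trans hx₀1 hx
    have hφx : 0 < φ x := hφ_pos x (Set.mem_Ici.mpr (by linarith))
    have h := hx₀' x (le_trans (le_max_left _ _) hx)
    rw [abs_lt] at h
    constructor
    · have h1 : 1 - η < f x / φ x := by linarith [h.1]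
      exact ((lt_div_iff₀ hφx).mp h1).le
    · have h2 : f x / φ x < 1 + η := by linarith [h.2]
      exact ((div_lt_iff₀ hφx).mp h2).le
  have hcomp : ∀ x, x₀ ≤ x →
      (1-η) * (F x - F x₀) ≤ Φ x - Φ x₀ ∧ Φ x - Φ x₀ ≤ (1+η) * (F x - F x₀) := by
    intro x hx
    have hx1 : 1 ≤ x := le_trans hx₀1 hx
    have hA : F x = F x₀ + ∫ u in x₀..x, 1 / f u := haddF x₀ x hx₀1 hx
    have hB : Φ x = Φ x₀ + ∫ u in x₀..x, 1 / φ u := haddΦ x₀ x hx₀1 hx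
    have hlo : (∫ u in x₀..x, (1-η) * (1 / f u)) ≤ ∫ u in x₀..x, 1 / φ u := by
      apply intervalIntegral.integral_mono_on hx ((hintf x₀ x hx₀1 hx1).const_mul (1-η))
        (hintφ x₀ x hx₀1 hx1)
      intro u hu
      have hu1 : 1 ≤ u := le_trans hx₀1 hu.1
      have hfu : 0 < f u := hf_pos u (Set.mem_Ici.mpr (by linarith))
      have hφu : 0 < φ u := hφ_pos u (Set.mem_Ici.mpr (by linarith))
      have hb := (hbound u hu.1).1
      rw [mul_one_div, div_le_div_iff₀ hfu hφu]
      nlinarith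
    have hhi : (∫ u in x₀..x, 1 / φ u) ≤ ∫ u in x₀..x, (1+η) * (1 / f u) := by
      apply intervalIntegral.integral_mono_on hx (hintφ x₀ x hx₀1 hx1)
        ((hintf x₀ x hx₀1 hx1).const_mul (1+η))
      intro u hu
      have hu1 : 1 ≤ u := le_trans hx₀1 hu.1
      have hfu : 0 < f u := hf_pos u (Set.mem_Ici.mpr (by linarith))
      have hφu : 0 < φ u := hφ_pos u (Set.mem_Ici.mpr (by linarith))
      have hb := (hbound u hu.1).2
      rw [mul_one_div, div_le_div_iff₀ hφu hfu]
      nlinarith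
    rw [intervalIntegral.integral_const_mul] at hlo hhi
    constructor
    · rw [hA, hB]; linarith
    · rw [hA, hB]; linarith
  filter_upwards [eventually_ge_atTop (1:ℝ), eventually_ge_atTop (F x₀),
    eventually_ge_atTop (Φ x₀ / η), eventually_ge_atTop (F x₀ / η)] with t ht1 htF htΦd htFd
  have ht0 : (0:ℝ) ≤ t := by linarith
  have htΦη : Φ x₀ ≤ η * t := by
    have h := (div_le_iff₀ hη0).mp htΦd; linarith [h]
  have htFη : F x₀ ≤ η * t := by
    have h := (div_le_iff₀ hη0).mp htFd; linarith [h]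
  set x := Finv t with hxdef
  have hx1 : 1 ≤ x := hFinv_ge t ht0
  have hFx : F x = t := hFinv_right t ht0
  have hxx₀ : x₀ ≤ x := by
    by_contra h
    push_neg at h
    have := hsmF x x₀ hx1 h
    rw [hFx] at this
    linarith
  obtain ⟨hlo, hhi⟩ := hcomp x hxx₀
  rw [hFx] at hlo hhi
  have hFx₀0 : 0 ≤ F x₀ := hFnonneg x₀ hx₀1
  have hΦx₀0 : 0 ≤ Φ x₀ := hΦnonneg x₀ hx₀1
  have hup : Φ x ≤ (1+2*η)*t := by nlinarith
  have hlow : (1 - 2*η) * t ≤ Φ x := by nlinarith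
  have h12 : (0:ℝ) < 1 - 2*η := by linarith
  have h1t : 0 ≤ (1-2*η)*t := mul_nonneg h12.le ht0
  have hxup : x ≤ (1+2*η) * Φinv t := by
    have h1 : x ≤ Φinv ((1+2*η)*t) :=
      hΦinv_ge2 ((1+2*η)*t) x (by nlinarith) hx1 hup
    exact le_trans h1 (hdbl t (1+2*η) ht0 (by linarith))
  have hxlow : (1-2*η) * Φinv t ≤ x := by
    have h1 : Φinv ((1-2*η)*t) ≤ x := hΦinv_le ((1-2*η)*t) x h1t hx1 hlow
    have hc1 : 1 ≤ 1/(1-2*η) := by rw [le_div_iff₀ h12]; linarith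
    have h3 := hdbl ((1-2*η)*t) (1/(1-2*η)) h1t hc1
    rw [show (1/(1-2*η)) * ((1-2*η)*t) = t by field_simp] at h3
    calc (1-2*η) * Φinv t ≤ (1-2*η) * ((1/(1-2*η)) * Φinv ((1-2*η)*t)) :=
          mul_le_mul_of_nonneg_left h3 h12.le
      _ = Φinv ((1-2*η)*t) := by field_simp
      _ ≤ x := h1
  have hy1 : 1 ≤ Φinv t := hΦinv_ge t ht0
  have hy0 : 0 < Φinv t := by linarith
  rw [Real.dist_eq, abs_lt]
  constructor
  · have h : (1-2*η) ≤ x / Φinv t := (le_div_iff₀ hy0).mpr (by linarith)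
    linarith
  · have h : x / Φinv t ≤ 1+2*η := (div_le_iff₀ hy0).mpr (by linarith)
    linarith
end

section
/- Let f: ℝ⁺ → (0,∞) be continuous and asymptotic to φ ∈ 𝒮 (strictly increasing C¹ with φ' → 0 at infinity), let M > 0, and let F(x) = ∫₁ˣ du/f(u). If a: [0,∞) → (0,∞) is continuous with a(t)/F⁻¹(Mt) → 1 as t → ∞, then F(a(t))/(Mt) → 1 as t → ∞. -/
open Filter Real Set

theorem stmt_10 (f φ φ' F Finv a : ℝ → ℝ) (M : ℝ)
    (hf_cont : ContinuousOn f (Set.Ici 0))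
    (hf_pos : ∀ x ∈ Set.Ici (0:ℝ), 0 < f x)
    (hφ_cont : ContinuousOn φ (Set.Ici 0))
    (hφ_pos : ∀ x ∈ Set.Ioi (0:ℝ), 0 < φ x)
    (hφ_deriv : ∀ x ∈ Set.Ioi (0:ℝ), HasDerivAt φ (φ' x) x)
    (hφ'_cont : ContinuousOn φ' (Set.Ioi 0))
    (hφ'_pos : ∀ x ∈ Set.Ioi (0:ℝ), 0 < φ' x)
    (hφ'_lim : Tendsto φ' atTop (nhds 0))
    (hasym : Tendsto (fun x => f x / φ x) atTop (nhds 1))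
    (hM : 0 < M)
    (hF : ∀ x > (0:ℝ), F x = ∫ u in (1:ℝ)..x, 1 / f u)
    (hFinv_right : ∀ t ≥ (0:ℝ), F (Finv t) = t)
    (hFinv_ge : ∀ t ≥ (0:ℝ), 1 ≤ Finv t)
    (hFinv_left : ∀ x ≥ (1:ℝ), Finv (F x) = x)
    (ha_cont : ContinuousOn a (Set.Ici 0))
    (ha_pos : ∀ t ∈ Set.Ici (0:ℝ), 0 < a t)
    (ha_asym : Tendsto (fun t => a t / Finv (M * t)) atTop (nhds 1)) :
    Tendsto (fun t => F (a t) / (M * t)) atTop (nhds 1) := by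
  -- φ is monotone on Ici 0
  have hφmono : StrictMonoOn φ (Set.Ici 0) := by
    apply strictMonoOn_of_deriv_pos (convex_Ici 0) hφ_cont
    intro x hx
    rw [interior_Ici] at hx
    rw [(hφ_deriv x hx).deriv]
    exact hφ'_pos x hx
  -- bound f between φ/2 and 2φ eventually
  obtain ⟨X₀, hX₀1, hX₀⟩ : ∃ X₀ ≥ (1:ℝ), ∀ u ≥ X₀, φ u / 2 ≤ f u ∧ f u ≤ 2 * φ u := by
    have h1 : ∀ᶠ x in atTop, f x / φ x ∈ Set.Icc (1/2 : ℝ) (3/2) :=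
      hasym (Icc_mem_nhds (by norm_num) (by norm_num))
    have h2 := h1.and (eventually_ge_atTop (1:ℝ))
    rw [eventually_atTop] at h2
    obtain ⟨N, hN⟩ := h2
    refine ⟨max N 1, le_max_right _ _, fun u hu => ?_⟩
    obtain ⟨⟨hl, hr⟩, hu1⟩ := hN u (le_trans (le_max_left _ _) hu)
    have hφu : 0 < φ u := hφ_pos u (lt_of_lt_of_le one_pos hu1)
    constructor
    · nlinarith [(div_le_iff₀ hφu).1 hr, (le_div_iff₀ hφu).1 hl]
    · nlinarith [(div_le_iff₀ hφu).1 hr, (le_div_iff₀ hφu).1 hl]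
  -- integrability of 1/f on intervals in [1,∞) ∪ starting anywhere ≥ some positive point
  have hint : ∀ x y : ℝ, 0 < x → x ≤ y → IntervalIntegrable (fun u => 1 / f u) MeasureTheory.volume x y := by
    intro x y hx hxy
    apply ContinuousOn.intervalIntegrable
    have hsub : Set.uIcc x y ⊆ Set.Ici 0 := by
      rw [Set.uIcc_of_le hxy]
      intro u hu; exact le_trans hx.le hu.1
    exact ContinuousOn.div continuousOn_const (hf_cont.mono hsub)
      (fun u hu => (hf_pos u (hsub hu)).ne')
  -- F difference as interval integral
  have hFsub : ∀ x y : ℝ, 0 < x → x ≤ y → F y - F x = ∫ u in x..y, 1 / f u := by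
    intro x y hx hxy
    rw [hF x hx, hF y (lt_of_lt_of_le hx hxy)]
    rcases le_or_gt 1 x with h1 | h1
    · exact intervalIntegral.integral_interval_sub_left
        (hint 1 y one_pos (le_trans h1 hxy)) (hint 1 x one_pos h1)
    · rw [intervalIntegral.integral_symm x 1]
      rcases le_or_gt 1 y with h2 | h2
      · have e1 := intervalIntegral.integral_add_adjacent_intervals
          (hint x 1 hx h1.le) (hint 1 y one_pos h2)
        linarith [e1]
      · rw [intervalIntegral.integral_symm y 1]
        have e1 := intervalIntegral.integral_add_adjacent_intervals
          (hint x y hx hxy) ((hint y 1 (lt_of_lt_of_le hx hxy) h2.le))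
        linarith [e1]
  -- monotonicity of F on [1,∞) (in fact (0,∞))
  have hFmono : ∀ x y : ℝ, 0 < x → x ≤ y → F x ≤ F y := by
    intro x y hx hxy
    have h := hFsub x y hx hxy
    have hnn : 0 ≤ ∫ u in x..y, 1 / f u := by
      apply intervalIntegral.integral_nonneg hxy
      intro u hu
      have := hf_pos u (le_trans hx.le hu.1)
      positivity
    linarith
  -- upper bound on increments of F
  have hub : ∀ x y : ℝ, X₀ ≤ x → x ≤ y → F y - F x ≤ (y - x) * (2 / φ x) := by
    intro x y hx hxy
    have hx0 : (0:ℝ) < x := lt_of_lt_of_le (lt_of_lt_of_le one_pos hX₀1) hx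
    have hφx : 0 < φ x := hφ_pos x hx0
    rw [hFsub x y hx0 hxy]
    calc (∫ u in x..y, 1 / f u) ≤ ∫ _u in x..y, 2 / φ x := by
          apply intervalIntegral.integral_mono_on hxy (hint x y hx0 hxy)
            intervalIntegrable_const
          intro u hu
          have hfu := (hX₀ u (le_trans hx hu.1)).1
          have hφu : 0 < φ u := hφ_pos u (lt_of_lt_of_le hx0 hu.1)
          have hφux : φ x ≤ φ u := hφmono.monotoneOn hx0.le (le_trans hx0.le hu.1) hu.1
          rw [div_le_div_iff₀ (hf_pos u (le_trans hx0.le hu.1)) hφx]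
          nlinarith
      _ = (y - x) * (2 / φ x) := by
          rw [intervalIntegral.integral_const, smul_eq_mul]
  -- lower bound on increments of F
  have hlb : ∀ x y : ℝ, X₀ ≤ x → x ≤ y → (y - x) * (1 / (2 * φ y)) ≤ F y - F x := by
    intro x y hx hxy
    have hx0 : (0:ℝ) < x := lt_of_lt_of_le (lt_of_lt_of_le one_pos hX₀1) hx
    have hy0 : (0:ℝ) < y := lt_of_lt_of_le hx0 hxy
    have hφy : 0 < φ y := hφ_pos y hy0
    rw [hFsub x y hx0 hxy]
    calc (y - x) * (1 / (2 * φ y)) = ∫ _u in x..y, 1 / (2 * φ y) := by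
          rw [intervalIntegral.integral_const, smul_eq_mul]
      _ ≤ ∫ u in x..y, 1 / f u := by
          apply intervalIntegral.integral_mono_on hxy intervalIntegrable_const
            (hint x y hx0 hxy)
          intro u hu
          have hfu := (hX₀ u (le_trans hx hu.1)).2
          have hφu : 0 < φ u := hφ_pos u (lt_of_lt_of_le hx0 hu.1)
          have hφuy : φ u ≤ φ y := hφmono.monotoneOn (le_trans hx0.le hu.1) hy0.le hu.2
          have hfupos := hf_pos u (le_trans hx0.le hu.1)
          rw [div_le_div_iff₀ (by positivity) hfupos]
          nlinarith
  -- F nonneg on [1,∞)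
  have hFnn : ∀ x : ℝ, 1 ≤ x → 0 ≤ F x := by
    intro x hx
    have hF1 : F 1 = 0 := by rw [hF 1 one_pos, intervalIntegral.integral_same]
    have := hFmono 1 x one_pos hx
    linarith
  -- lower bound on F itself
  have hFlb : ∀ b : ℝ, 2 * X₀ ≤ b → b / (8 * φ (3 * b / 4)) ≤ F b := by
    intro b hb
    have hX₀pos : (0:ℝ) < X₀ := lt_of_lt_of_le one_pos hX₀1
    have hb0 : (0:ℝ) < b := by linarith
    have h1 : X₀ ≤ b / 2 := by linarith
    have h2 : b / 2 ≤ 3 * b / 4 := by linarith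
    have h3 : 3 * b / 4 ≤ b := by linarith
    have hφ3 : 0 < φ (3 * b / 4) := hφ_pos _ (Set.mem_Ioi.mpr (by linarith))
    have e1 := hlb (b/2) (3*b/4) h1 h2
    have e2 := hFmono (3*b/4) b (by linarith) h3
    have e3 := hFnn (b/2) (by linarith)
    have : (3*b/4 - b/2) * (1 / (2 * φ (3*b/4))) = b / (8 * φ (3*b/4)) := by
      field_simp; ring
    linarith [this ▸ e1]
  -- Finv (M t) → ∞
  have hMt : Tendsto (fun t : ℝ => M * t) atTop atTop :=
    Tendsto.const_mul_atTop hM tendsto_id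
  have hbtop : Tendsto (fun t : ℝ => Finv (M * t)) atTop atTop := by
    rw [tendsto_atTop]
    intro C
    have hev := hMt.eventually_ge_atTop (max 0 (F (max C 1)) + 1)
    filter_upwards [hev] with t ht
    have hs0 : (0:ℝ) ≤ M * t := by
      have : (0:ℝ) ≤ max 0 (F (max C 1)) := le_max_left _ _
      linarith
    by_contra hcon
    push_neg at hcon
    have h1 : 1 ≤ Finv (M * t) := hFinv_ge _ hs0
    have h2 : Finv (M * t) ≤ max C 1 := le_trans hcon.le (le_max_left _ _)
    have h3 : F (Finv (M * t)) ≤ F (max C 1) :=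
      hFmono _ _ (lt_of_lt_of_le one_pos h1) h2
    rw [hFinv_right _ hs0] at h3
    have : F (max C 1) ≤ max 0 (F (max C 1)) := le_max_right _ _
    linarith
  -- main estimate
  rw [Metric.tendsto_nhds]
  intro ε hε
  set δ : ℝ := min (ε / 32) (1 / 4) with hδdef
  have hδpos : 0 < δ := lt_min (by linarith) (by norm_num)
  have hδ4 : δ ≤ 1 / 4 := min_le_right _ _
  have hδε : 16 * δ < ε := by
    have : δ ≤ ε / 32 := min_le_left _ _
    linarith
  have hX₀pos : (0:ℝ) < X₀ := lt_of_lt_of_le one_pos hX₀1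
  have hev1 : ∀ᶠ t in atTop, dist (a t / Finv (M * t)) 1 < δ :=
    (Metric.tendsto_nhds.1 ha_asym) δ hδpos
  have hev2 : ∀ᶠ t in atTop, 2 * X₀ ≤ Finv (M * t) := hbtop.eventually_ge_atTop _
  have hev3 : ∀ᶠ t in atTop, (0:ℝ) < t := eventually_gt_atTop 0
  filter_upwards [hev1, hev2, hev3] with t h1 h2 h3
  set b : ℝ := Finv (M * t) with hbdef
  have hMt0 : 0 < M * t := mul_pos hM h3
  have hFb : F b = M * t := hFinv_right _ hMt0.le
  have hb0 : 0 < b := by linarith [hX₀pos, h2]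
  -- |a t - b| ≤ δ b
  have hab : |a t - b| ≤ δ * b := by
    have : dist (a t / b) 1 = |a t / b - 1| := by rw [Real.dist_eq]
    rw [this] at h1
    have heq : a t - b = (a t / b - 1) * b := by field_simp
    rw [heq, abs_mul, abs_of_pos hb0]
    exact mul_le_mul_of_nonneg_right h1.le hb0.le
  have hab1 := abs_le.1 hab
  have hφ3 : 0 < φ (3 * b / 4) := hφ_pos _ (Set.mem_Ioi.mpr (by linarith))
  have hφb : 0 < φ b := hφ_pos _ (Set.mem_Ioi.mpr hb0)
  have hφ3b : φ (3 * b / 4) ≤ φ b :=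
    hφmono.monotoneOn (Set.mem_Ici.mpr (by linarith)) (Set.mem_Ici.mpr hb0.le) (by linarith)
  have hFblb : b / (8 * φ (3 * b / 4)) ≤ F b := hFlb b h2
  have hFbpos : 0 < F b := by rw [hFb]; exact hMt0
  -- key bound |F (a t) - F b| ≤ 16 δ F b
  have hkey : |F (a t) - F b| ≤ 16 * δ * F b := by
    rcases le_total (a t) b with hc | hc
    · -- a t ≤ b
      have haX : X₀ ≤ a t := by nlinarith
      have hd := hub (a t) b haX hc
      have hφa : φ (3 * b / 4) ≤ φ (a t) :=
        hφmono.monotoneOn (Set.mem_Ici.mpr (by linarith)) (Set.mem_Ici.mpr (by linarith))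
          (by nlinarith)
      have hφapos : 0 < φ (a t) := hφ_pos _ (Set.mem_Ioi.mpr (by linarith))
      have hbound : F b - F (a t) ≤ 2 * δ * b / φ (3 * b / 4) := by
        have e1 : (b - a t) * (2 / φ (a t)) ≤ (δ * b) * (2 / φ (3 * b / 4)) := by
          apply mul_le_mul (by linarith) _ (by positivity) (by positivity)
          apply div_le_div_of_nonneg_left (by norm_num) hφ3 hφa
        calc F b - F (a t) ≤ (b - a t) * (2 / φ (a t)) := hd
          _ ≤ (δ * b) * (2 / φ (3 * b / 4)) := e1
          _ = 2 * δ * b / φ (3 * b / 4) := by ring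
      have hfin : 2 * δ * b / φ (3 * b / 4) ≤ 16 * δ * F b := by
        calc 2 * δ * b / φ (3 * b / 4) = 16 * δ * (b / (8 * φ (3 * b / 4))) := by
              field_simp; ring
          _ ≤ 16 * δ * F b := by
              apply mul_le_mul_of_nonneg_left hFblb (by positivity)
      rw [abs_sub_comm, abs_of_nonneg (by linarith [hFmono (a t) b (by linarith) hc])]
      linarith
    · -- b ≤ a t
      have hd := hub b (a t) (by linarith) hc
      have hbound : F (a t) - F b ≤ 2 * δ * b / φ b := by
        have e1 : (a t - b) * (2 / φ b) ≤ (δ * b) * (2 / φ b) := by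
          apply mul_le_mul_of_nonneg_right (by linarith) (by positivity)
        calc F (a t) - F b ≤ (a t - b) * (2 / φ b) := hd
          _ ≤ (δ * b) * (2 / φ b) := e1
          _ = 2 * δ * b / φ b := by ring
      have hfin : 2 * δ * b / φ b ≤ 16 * δ * F b := by
        calc 2 * δ * b / φ b ≤ 2 * δ * b / φ (3 * b / 4) := by
              apply div_le_div_of_nonneg_left (by positivity) hφ3 hφ3b
          _ = 16 * δ * (b / (8 * φ (3 * b / 4))) := by field_simp; ring
          _ ≤ 16 * δ * F b := mul_le_mul_of_nonneg_left hFblb (by positivity)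
      rw [abs_of_nonneg (by linarith [hFmono b (a t) hb0 hc])]
      linarith
  -- conclude
  rw [Real.dist_eq]
  have : F (a t) / (M * t) - 1 = (F (a t) - F b) / (M * t) := by
    rw [hFb]; field_simp
  rw [this, abs_div, abs_of_pos hMt0, div_lt_iff₀ hMt0]
  calc |F (a t) - F b| ≤ 16 * δ * F b := hkey
    _ = 16 * δ * (M * t) := by rw [hFb]
    _ < ε * (M * t) := by
        apply mul_lt_mul_of_pos_right hδε hMt0
end

section
/- Suppose f: [0,∞) → (0,∞) is continuous and f(x) ~ e^{−αx} as x → ∞ for some α > 0. Let F(x) = ∫₁ˣ du/f(u). Then F⁻¹(x) ~ (1/α) log x as x → ∞. -/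
open Filter Real Set Asymptotics MeasureTheory Topology

/-!
Since `1 / f u ~ exp (α u)` and `∫ exp (α u)` diverges, integrating the equivalence gives
`F x ~ exp (α x) / α`, hence `log (F x) ~ α x`. As `F` is increasing, `F⁻¹ t → ∞`, and substituting
`x = F⁻¹ t` turns this into `log t ~ α F⁻¹ t`.
-/

theorem Asymptotics.IsEquivalent.intervalIntegral_atTop {h k : ℝ → ℝ} {a : ℝ}
    (hequiv : h ~[atTop] k) (hh : ∀ x ≥ a, IntervalIntegrable h volume a x)
    (hk : ∀ x ≥ a, IntervalIntegrable k volume a x) (hk_nonneg : ∀ u ≥ a, 0 ≤ k u)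
    (htop : Tendsto (fun x => ∫ u in a..x, k u) atTop atTop) :
    (fun x => ∫ u in a..x, h u) ~[atTop] fun x => ∫ u in a..x, k u := by
  refine IsLittleO.of_bound fun ε hε => ?_
  obtain ⟨X, hX⟩ := eventually_atTop.1 <|
    (hequiv.isLittleO.bound (half_pos hε)).and (eventually_ge_atTop a)
  have hXa : a ≤ X := (hX X le_rfl).2
  set C := ‖∫ u in a..X, (h u - k u)‖
  filter_upwards [eventually_ge_atTop X, htop.eventually_ge_atTop (2 * C / ε)] with x hxX hCx
  have hxa : a ≤ x := hXa.trans hxX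
  have hint : ∀ y ≥ a, IntervalIntegrable (fun u => h u - k u) volume a y :=
    fun y hy => (hh y hy).sub (hk y hy)
  have htail : ‖∫ u in X..x, (h u - k u)‖ ≤ ε / 2 * ∫ u in a..x, k u := by
    calc ‖∫ u in X..x, (h u - k u)‖ ≤ ∫ u in X..x, ε / 2 * k u := by
          refine intervalIntegral.norm_integral_le_of_norm_le hxX
            (ae_of_all _ fun u hu => ?_) (((hk X hXa).symm.trans (hk x hxa)).const_mul _)
          simpa [Real.norm_of_nonneg (hk_nonneg u (hXa.trans hu.1.le))] using (hX u hu.1.le).1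
      _ ≤ ε / 2 * ∫ u in a..x, k u := by
          rw [intervalIntegral.integral_const_mul]
          gcongr
          exact intervalIntegral.integral_mono_interval hXa hxX le_rfl
            ((ae_restrict_iff' measurableSet_Ioc).2 (ae_of_all _ fun u hu => hk_nonneg u hu.1.le))
            (hk x hxa)
  have hsplit : (∫ u in a..x, h u) - ∫ u in a..x, k u
      = (∫ u in a..X, (h u - k u)) + ∫ u in X..x, (h u - k u) := by
    rw [intervalIntegral.integral_add_adjacent_intervals (hint X hXa)
      ((hint X hXa).symm.trans (hint x hxa)), intervalIntegral.integral_sub (hh x hxa) (hk x hxa)]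
  have hCle : C ≤ ε / 2 * ∫ u in a..x, k u := by
    rw [div_le_iff₀ hε] at hCx; linarith
  have hK : 0 ≤ ∫ u in a..x, k u :=
    intervalIntegral.integral_nonneg hxa fun u hu => hk_nonneg u hu.1
  rw [Pi.sub_apply, hsplit, Real.norm_of_nonneg hK]
  calc _ ≤ C + ‖∫ u in X..x, (h u - k u)‖ := norm_add_le _ _
    _ ≤ ε * ∫ u in a..x, k u := by linarith

theorem Asymptotics.isEquivalent_one_div_of_tendsto_mul {𝕜 α : Type*} [NormedField 𝕜]
    {l : Filter α} {f g : α → 𝕜} (hfg : Tendsto (fun x => f x * g x) l (𝓝 1)) :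
    (fun x => 1 / f x) ~[l] g :=
  isEquivalent_of_tendsto_one <| by
    simpa only [inv_one] using
      (hfg.inv₀ one_ne_zero).congr fun x => by simp only [Pi.div_apply]; ring

theorem tendsto_const_mul_exp_mul_atTop {c α : ℝ} (hc : 0 < c) (hα : 0 < α) :
    Tendsto (fun x => c * exp (α * x)) atTop atTop :=
  (tendsto_exp_comp_atTop.2 (tendsto_id.const_mul_atTop hα)).const_mul_atTop hc

theorem integral_exp_mul_isEquivalent {α : ℝ} (hα : 0 < α) (a : ℝ) :
    (fun x => ∫ u in a..x, exp (α * u)) ~[atTop] fun x => α⁻¹ * exp (α * x) := by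
  refine (IsEquivalent.refl.add_const_of_norm_tendsto_atTop
    (tendsto_norm_atTop_atTop.comp (tendsto_const_mul_exp_mul_atTop (inv_pos.2 hα) hα))
    (c := -(α⁻¹ * exp (α * a)))).congr_left (Eventually.of_forall fun x => ?_)
  simp only [intervalIntegral.integral_comp_mul_left (fun u => exp u) hα.ne', integral_exp,
    smul_eq_mul]
  ring

theorem Asymptotics.IsEquivalent.log_of_const_mul_exp {g : ℝ → ℝ} {c α : ℝ}
    (hc : 0 < c) (hα : 0 < α) (hg : g ~[atTop] fun x => c * exp (α * x)) :
    (fun x => Real.log (g x)) ~[atTop] fun x => α * x := by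
  refine (hg.log (tendsto_const_mul_exp_mul_atTop hc hα)).trans ?_
  refine (IsEquivalent.refl.const_add_of_norm_tendsto_atTop
    (tendsto_norm_atTop_atTop.comp (tendsto_id.const_mul_atTop hα))
    (c := Real.log c)).congr_left (Eventually.of_forall fun x => ?_)
  simp [log_mul hc.ne' (exp_pos _).ne']

theorem tendsto_atTop_of_monotoneOn_of_rightInverse {α β : Type*} [LinearOrder α] [Preorder β]
    [NoMaxOrder β] [Nonempty β] {G : α → β} {g : β → α} {a : α} (hG : MonotoneOn G (Ici a))
    (hg : ∀ᶠ t in atTop, a ≤ g t ∧ G (g t) = t) : Tendsto g atTop atTop := by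
  refine tendsto_atTop.2 fun M => ?_
  filter_upwards [hg, eventually_gt_atTop (G (max M a))] with t ⟨hat, hGt⟩ hlt
  by_contra! hM
  have := hG hat (le_max_right M a) (hM.le.trans (le_max_left M a))
  rw [hGt] at this
  exact this.not_gt hlt

theorem monotoneOn_intervalIntegral_of_nonneg {h : ℝ → ℝ} {a : ℝ}
    (hh : ∀ x ≥ a, IntervalIntegrable h volume a x) (hh_nonneg : ∀ u ≥ a, 0 ≤ h u) :
    MonotoneOn (fun x => ∫ u in a..x, h u) (Ici a) := fun _ hx y _ hxy =>
  intervalIntegral.integral_mono_interval le_rfl hx hxy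
    ((ae_restrict_iff' measurableSet_Ioc).2 (ae_of_all _ fun u hu => hh_nonneg u hu.1.le))
    (hh y (le_trans hx hxy))

theorem isEquivalent_integral_one_div_of_tendsto_mul_exp {f : ℝ → ℝ} {α a : ℝ} (hα : 0 < α)
    (hint : ∀ x ≥ a, IntervalIntegrable (fun u => 1 / f u) volume a x)
    (hasym : Tendsto (fun x => f x * exp (α * x)) atTop (𝓝 1)) :
    (fun x => ∫ u in a..x, 1 / f u) ~[atTop] fun x => α⁻¹ * exp (α * x) :=
  have hexp_equiv := integral_exp_mul_isEquivalent hα a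
  ((isEquivalent_one_div_of_tendsto_mul hasym).intervalIntegral_atTop hint
    (fun x _ => (continuous_exp.comp (continuous_const_mul α)).intervalIntegrable a x)
    (fun _ _ => (exp_pos _).le)
    (hexp_equiv.symm.tendsto_atTop (tendsto_const_mul_exp_mul_atTop (inv_pos.2 hα) hα))).trans
    hexp_equiv

theorem stmt_13_general (f F Finv : ℝ → ℝ) (α : ℝ)
    (hα : 0 < α)
    (hf_cont : ContinuousOn f (Set.Ici 0))
    (hf_pos : ∀ x ∈ Set.Ici (0:ℝ), 0 < f x)
    (hasym : Tendsto (fun x => f x * Real.exp (α * x)) atTop (nhds 1))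
    (hF : ∀ x > (0:ℝ), F x = ∫ u in (1:ℝ)..x, 1 / f u)
    (hFinv_right : ∀ t ≥ (0:ℝ), F (Finv t) = t)
    (hFinv_ge : ∀ t ≥ (0:ℝ), 1 ≤ Finv t) :
    Tendsto (fun x => Finv x / ((1 / α) * Real.log x)) atTop (nhds 1) := by
  have hint : ∀ x ≥ (1:ℝ), IntervalIntegrable (fun u => 1 / f u) volume 1 x := fun x hx =>
    ((continuousOn_const.div hf_cont fun u hu => (hf_pos u hu).ne').mono
      fun u hu => zero_le_one.trans hu.1).intervalIntegrable_of_Icc hx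
  have hpos : ∀ u ≥ (1:ℝ), 0 ≤ 1 / f u := fun u hu =>
    one_div_nonneg.2 (hf_pos u (zero_le_one.trans hu)).le
  have hF_eq : ∀ᶠ x in atTop, (∫ u in (1:ℝ)..x, 1 / f u) = F x :=
    (eventually_gt_atTop 0).mono fun x hx => (hF x hx).symm
  have hF_equiv : F ~[atTop] fun x => α⁻¹ * exp (α * x) :=
    (isEquivalent_integral_one_div_of_tendsto_mul_exp hα hint hasym).congr_left hF_eq
  have hFinv_top : Tendsto Finv atTop atTop :=
    tendsto_atTop_of_monotoneOn_of_rightInverse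
      ((monotoneOn_intervalIntegral_of_nonneg hint hpos).congr
        fun x hx => (hF x (zero_lt_one.trans_le hx)).symm)
      ((eventually_ge_atTop 0).mono fun t ht => ⟨hFinv_ge t ht, hFinv_right t ht⟩)
  have hlog : (fun t => α * Finv t) ~[atTop] Real.log :=
    ((hF_equiv.log_of_const_mul_exp (inv_pos.2 hα) hα).comp_tendsto
      hFinv_top).symm.congr_right ((eventually_ge_atTop 0).mono fun t ht => by
        simp only [Function.comp_apply, hFinv_right t ht])
  refine ((isEquivalent_iff_tendsto_one ((eventually_gt_atTop 1).mono fun t ht =>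
    (log_pos ht).ne')).1 hlog).congr fun t => ?_
  simp only [Pi.div_apply]
  field_simp

theorem stmt_13 (f F Finv : ℝ → ℝ) (α : ℝ)
    (hα : 0 < α)
    (hf_cont : ContinuousOn f (Set.Ici 0))
    (hf_pos : ∀ x ∈ Set.Ici (0:ℝ), 0 < f x)
    (hasym : Tendsto (fun x => f x * Real.exp (α * x)) atTop (nhds 1))
    (hF : ∀ x > (0:ℝ), F x = ∫ u in (1:ℝ)..x, 1 / f u)
    (hFinv_right : ∀ t ≥ (0:ℝ), F (Finv t) = t)
    (hFinv_ge : ∀ t ≥ (0:ℝ), 1 ≤ Finv t)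
    (hFinv_left : ∀ x ≥ (1:ℝ), Finv (F x) = x) :
    Tendsto (fun x => Finv x / ((1 / α) * Real.log x)) atTop (nhds 1) :=
  stmt_13_general f F Finv α hα hf_cont hf_pos hasym hF hFinv_right hFinv_ge
end
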